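/- Let (A, M, {R_α}_{α∈Ω}) be a relative Rota-Baxter family algebra over k, and let μ₁ : A × A → A, l₁ : A × M → M, r₁ : M × A → M be bilinear maps and {R_{1,α} : M → A}_{α∈Ω} a family of linear maps. On A[ε] := A ⊕ A (pairs (a, a') thought of as a + εa', a module over k[t]/(t²)) define the multiplication μ_t((a,a'),(b,b')) := (a·b, μ₁(a,b) + a·b' + a'·b); on M[ε] := M ⊕ M define the actions l_t((a,a'),(u,u')) := (a·u, l₁(a,u) + a·u' + a'·u) and r_t((u,u'),(a,a')) := (u·a, r₁(u,a) + u·a' + u'·a); and define (R_t)_α(u,u') := (R_α(u), R_{1,α}(u) + R_α(u')). Then ((A[ε], μ_t), (M[ε], l_t, r_t), {(R_t)_α}_{α∈Ω}) is a relative Rota-Baxter family algebra over the ring k[t]/(t²) (i.e., μ_t is associative, l_t and r_t make M[ε] an A[ε]-bimodule, and the relative Rota-Baxter family identity holds) if and only if the following hold for all a, b, c ∈ A, u, v ∈ M and α, β ∈ Ω: (i) μ₁(a·b, c) + μ₁(a,b)·c = μ₁(a, b·c) + a·μ₁(b,c); (ii) l₁(a·b, u) + μ₁(a,b)·u = l₁(a,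 b·u) + a·l₁(b,u); (iii) r₁(a·u, b) + l₁(a,u)·b = l₁(a, u·b) + a·r₁(u,b); (iv) r₁(u·a, b) + r₁(u,a)·b = r₁(u, a·b) + u·μ₁(a,b); (v) R_{1,α}(u)·R_β(v) + R_α(u)·R_{1,β}(v) + μ₁(R_α(u), R_β(v)) = R_{αβ}( l₁(R_α(u), v) + R_{1,α}(u)·v + r₁(u, R_β(v)) + u·R_{1,β}(v) ) + R_{1,αβ}( R_α(u)·v + u·R_β(v) ). -/
import Mathlib


variable {k : Type*} [Field k] [CharZero k]
variable {Ω : Type*} [Semigroup Ω]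
variable {A : Type*} [NonUnitalRing A] [Module k A] [SMulCommClass k A A] [IsScalarTower k A A]
variable {M : Type*} [AddCommGroup M] [Module k M]

/-- The truncated multiplication `μ_t` on `A[ε] = A ⊕ A`:
`μ_t((a,a'),(b,b')) = (a·b, μ₁(a,b) + a·b' + a'·b)`. -/
def mulT (mu1 : A →ₗ[k] A →ₗ[k] A) : A × A → A × A → A × A :=
  fun x y => (x.1 * y.1, mu1 x.1 y.1 + x.1 * y.2 + x.2 * y.1)

/-- The truncated left action `l_t` of `A[ε]` on `M[ε] = M ⊕ M`. -/
def lactT (lact : A →ₗ[k] M →ₗ[k] M) (l1 : A →ₗ[k] M →ₗ[k] M) :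
    A × A → M × M → M × M :=
  fun x w => (lact x.1 w.1, l1 x.1 w.1 + lact x.1 w.2 + lact x.2 w.1)

/-- The truncated right action `r_t` of `A[ε]` on `M[ε] = M ⊕ M`. -/
def ractT (ract : M →ₗ[k] A →ₗ[k] M) (r1 : M →ₗ[k] A →ₗ[k] M) :
    M × M → A × A → M × M :=
  fun w x => (ract w.1 x.1, r1 w.1 x.1 + ract w.1 x.2 + ract w.2 x.1)

/-- The truncated family of operators `(R_t)_α(u,u') = (R_α u, R_{1,α} u + R_α u')`. -/
def RT (R R1 : Ω → M →ₗ[k] A) (α : Ω) : M × M → A × A :=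
  fun w => (R α w.1, R1 α w.1 + R α w.2)

/- STATEMENT 15: the truncated structure
`((A[ε], μ_t), (M[ε], l_t, r_t), {(R_t)_α})` is a relative Rota-Baxter family
algebra over `k[t]/(t²)` (i.e. `μ_t` is associative, `(l_t, r_t)` makes `M[ε]`
an `A[ε]`-bimodule, and the relative Rota-Baxter family identity holds) if and
only if the infinitesimal deformation equations (i)–(v) hold. -/

theorem infinitesimal_deformation_iff
    (lact : A →ₗ[k] M →ₗ[k] M) (ract : M →ₗ[k] A →ₗ[k] M)
    -- `(A, M, {R_α})` is a relative Rota-Baxter family algebra: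
    (hlact : ∀ (a b : A) (u : M), lact (a * b) u = lact a (lact b u))
    (hmid : ∀ (a : A) (u : M) (b : A), ract (lact a u) b = lact a (ract u b))
    (hract : ∀ (u : M) (a b : A), ract (ract u a) b = ract u (a * b))
    (R : Ω → M →ₗ[k] A)
    (hRB : ∀ (α β : Ω) (u v : M),
      R α u * R β v = R (α * β) (lact (R α u) v + ract u (R β v)))
    -- the infinitesimal data
    (mu1 : A →ₗ[k] A →ₗ[k] A) (l1 : A →ₗ[k] M →ₗ[k] M) (r1 : M →ₗ[k] A →ₗ[k] M)
    (R1 : Ω → M →ₗ[k] A) :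
    -- the truncated structure is a relative Rota-Baxter family algebra over `k[t]/(t²)`
    ((∀ x y z : A × A, mulT mu1 (mulT mu1 x y) z = mulT mu1 x (mulT mu1 y z)) ∧
     (∀ (x y : A × A) (w : M × M),
        lactT lact l1 (mulT mu1 x y) w = lactT lact l1 x (lactT lact l1 y w)) ∧
     (∀ (x : A × A) (w : M × M) (y : A × A),
        ractT ract r1 (lactT lact l1 x w) y = lactT lact l1 x (ractT ract r1 w y)) ∧
     (∀ (w : M × M) (x y : A × A),
        ractT ract r1 (ractT ract r1 w x) y = ractT ract r1 w (mulT mu1 x y)) ∧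
     (∀ (α β : Ω) (u v : M × M),
        mulT mu1 (RT R R1 α u) (RT R R1 β v)
          = RT R R1 (α * β) (lactT lact l1 (RT R R1 α u) v + ractT ract r1 u (RT R R1 β v))))
    ↔
    -- the infinitesimal deformation equations
    ((∀ a b c : A, mu1 (a * b) c + mu1 a b * c = mu1 a (b * c) + a * mu1 b c) ∧
     (∀ (a b : A) (u : M),
        l1 (a * b) u + lact (mu1 a b) u = l1 a (lact b u) + lact a (l1 b u)) ∧
     (∀ (a : A) (u : M) (b : A),
        r1 (lact a u) b + ract (l1 a u) b = l1 a (ract u b) + lact a (r1 u b)) ∧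
     (∀ (u : M) (a b : A),
        r1 (ract u a) b + ract (r1 u a) b = r1 u (a * b) + ract u (mu1 a b)) ∧
     (∀ (α β : Ω) (u v : M),
        R1 α u * R β v + R α u * R1 β v + mu1 (R α u) (R β v)
          = R (α * β) (l1 (R α u) v + lact (R1 α u) v + r1 u (R β v) + ract u (R1 β v))
            + R1 (α * β) (lact (R α u) v + ract u (R β v)))) := by
  constructor
  · rintro ⟨h1, h2, h3, h4, h5⟩
    refine ⟨fun a b c => ?_, fun a b u => ?_, fun a u b => ?_, fun u a b => ?_,
      fun α β u v => ?_⟩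
    · have := congrArg Prod.snd (h1 (a, 0) (b, 0) (c, 0))
      simp only [mulT, map_zero, LinearMap.zero_apply, mul_zero, zero_mul, add_zero,
        zero_add] at this
      linear_combination (norm := abel) this
    · have := congrArg Prod.snd (h2 (a, 0) (b, 0) (u, 0))
      simp only [mulT, lactT, map_zero, LinearMap.zero_apply, mul_zero, zero_mul, add_zero,
        zero_add] at this
      linear_combination (norm := abel) this
    · have := congrArg Prod.snd (h3 (a, 0) (u, 0) (b, 0))
      simp only [mulT, lactT, ractT, map_zero, LinearMap.zero_apply, mul_zero, zero_mul,
        add_zero, zero_add] at this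
      linear_combination (norm := abel) this
    · have := congrArg Prod.snd (h4 (u, 0) (a, 0) (b, 0))
      simp only [mulT, ractT, map_zero, LinearMap.zero_apply, mul_zero, zero_mul, add_zero,
        zero_add] at this
      linear_combination (norm := abel) this
    · have := congrArg Prod.snd (h5 α β (u, 0) (v, 0))
      simp only [mulT, lactT, ractT, RT, Prod.mk_add_mk, Prod.fst_add, Prod.snd_add,
        map_zero, map_add, LinearMap.zero_apply, LinearMap.add_apply, mul_zero, zero_mul,
        add_zero, zero_add] at this
      simp only [map_add]
      linear_combination (norm := abel) this
  · rintro ⟨h1, h2, h3, h4, h5⟩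
    refine ⟨fun x y z => ?_, fun x y w => ?_, fun x w y => ?_, fun w x y => ?_,
      fun α β u v => ?_⟩
    · refine Prod.ext (by simp [mulT, mul_assoc]) ?_
      simp only [mulT, map_add, LinearMap.add_apply, add_mul, mul_add]
      linear_combination (norm := abel)
        h1 x.1 y.1 z.1 + mul_assoc x.1 y.1 z.2 + mul_assoc x.1 y.2 z.1 + mul_assoc x.2 y.1 z.1
    · refine Prod.ext (by simp [mulT, lactT, hlact]) ?_
      simp only [mulT, lactT, map_add, LinearMap.add_apply]
      linear_combination (norm := abel)
        h2 x.1 y.1 w.1 + hlact x.1 y.1 w.2 + hlact x.1 y.2 w.1 + hlact x.2 y.1 w.1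
    · refine Prod.ext (by simp [lactT, ractT, hmid]) ?_
      simp only [lactT, ractT, map_add, LinearMap.add_apply]
      linear_combination (norm := abel)
        h3 x.1 w.1 y.1 + hmid x.1 w.1 y.2 + hmid x.1 w.2 y.1 + hmid x.2 w.1 y.1
    · refine Prod.ext (by simp [mulT, ractT, hract]) ?_
      simp only [mulT, ractT, map_add, LinearMap.add_apply]
      linear_combination (norm := abel)
        h4 w.1 x.1 y.1 + hract w.1 x.1 y.2 + hract w.1 x.2 y.1 + hract w.2 x.1 y.1
    · refine Prod.ext (by simp [mulT, RT, lactT, ractT, hRB]) ?_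
      simp only [mulT, lactT, ractT, RT, Prod.fst_add, Prod.snd_add, map_add,
        LinearMap.add_apply, mul_add, add_mul]
      have e1 := hRB α β u.1 v.2
      have e2 := hRB α β u.2 v.1
      have e3 := h5 α β u.1 v.1
      simp only [map_add] at e1 e2 e3
      linear_combination (norm := abel) e3 + e1 + e2
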